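/- Let p be an odd prime, q ∈ ℂ_p with |q - 1|_p < p^{-1/(p-1)}, and k a positive integer. For odd d coprime to p and 0 ≤ a < dp^N, set μ*_k(a + dp^N ℤ_p) = (-1)^a [dp^N]_q^k ([2]_q/[2]_{q^{dp^N}}) E_{k,q^{dp^N}}(a/(dp^N)) with E_{k,Q}(t) = (1+Q)(1-Q)^{-k} ∑_{l=0}^{k} (-1)^l C(k,l) Q^{tl}/(1+Q^l) (Q^{tl} = exp(tl log Q)). Then as N → ∞, μ*_k(a + dp^N ℤ_p) converges to ((1+q)/2)·(-1)^a [a]_q^k, where [a]_q = (1-q^a)/(1-q). -/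

import Mathlib

/-- The q-Euler polynomial `E_{k,Q}(t)` expressed through the element `Qt = Q^t`. -/
noncomputable def qEulerPolyAt {K : Type*} [Field K] (Q Qt : K) (k : ℕ) : K :=
  (1 + Q) * ((1 - Q)⁻¹) ^ k *
    ∑ l ∈ Finset.range (k + 1), (-1 : K) ^ l * (k.choose l : K) * Qt ^ l / (1 + Q ^ l)

/-!
Write `Q_N = q ^ (d p ^ N)`. For `Q ≠ 1, -1` the factor `[d p ^ N]_q ^ k` cancels the pole
`(1 - Q)⁻ᵏ` of `E_{k,Q}` and `[2]_Q` cancels its factor `1 + Q`, leaving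
`(1 + q) (1 - q)⁻ᵏ ∑ₗ (-1)ˡ C(k, l) q^{al} / (1 + Qˡ)`; this is continuous at `Q = 1`, where the
binomial theorem gives `(1 + q) (1 - q)⁻ᵏ (1 - qᵃ)ᵏ / 2`.

The `p`-adic input is `‖Q_N - 1‖ = ‖p‖ᴺ ‖q - 1‖`: on the disc `‖y - 1‖ᵖ⁻¹ < ‖p‖` raising to the
`p`-th power multiplies the distance to `1` by `‖p‖`, and raising to a power prime to `p`
preserves it. Hence `Q_N → 1` and, for `q ≠ 1`, `Q_N ≠ 1`.
-/

open Finset Filter Topology IsUltrametricDist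

namespace IsUltrametricDist

lemma norm_add_eq_left_of_norm_lt {E : Type*} [SeminormedAddGroup E] [IsUltrametricDist E]
    {x y : E} (h : ‖y‖ < ‖x‖) : ‖x + y‖ = ‖x‖ :=
  (norm_add_eq_max_of_norm_ne_norm h.ne').trans (max_eq_left h.le)

variable {K : Type*} [NormedField K] [IsUltrametricDist K]

lemma norm_natCast_eq_one_of_coprime {p n : ℕ} (hp : ‖(p : K)‖ < 1) (hn : n.Coprime p) :
    ‖(n : K)‖ = 1 := by
  refine le_antisymm (norm_natCast_le_one K n) (not_lt.mp fun hlt => ?_)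
  have hbezout : (n : K) * (n.gcdA p : K) + (p : K) * (n.gcdB p : K) = 1 := by
    have h := Nat.gcd_eq_gcd_ab n p
    rw [hn] at h
    simpa using (congrArg (Int.cast : ℤ → K) h).symm
  have hn' : ‖(n : K) * (n.gcdA p : K)‖ < 1 := by
    rw [norm_mul]
    exact mul_lt_one_of_nonneg_of_lt_one_left (norm_nonneg _) hlt (norm_intCast_le_one K _)
  have hp' : ‖(p : K) * (n.gcdB p : K)‖ < 1 := by
    rw [norm_mul]
    exact mul_lt_one_of_nonneg_of_lt_one_left (norm_nonneg _) hp (norm_intCast_le_one K _)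
  have := (norm_add_le_max _ _).trans_lt (max_lt hn' hp')
  rw [hbezout, norm_one] at this
  exact this.false

lemma norm_sub_one_lt_one_of_pow_lt_norm_prime {p : ℕ} (hp : p.Prime) {y : K}
    (hy : ‖y - 1‖ ^ (p - 1) < ‖(p : K)‖) : ‖y - 1‖ < 1 :=
  (pow_lt_one_iff_of_nonneg (norm_nonneg _) (Nat.sub_ne_zero_of_lt hp.one_lt)).mp
    (hy.trans_le (norm_natCast_le_one K p))

lemma norm_le_one_of_norm_sub_one_lt_one {y : K} (hy : ‖y - 1‖ < 1) : ‖y‖ ≤ 1 := by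
  simpa using (norm_add_le_max (y - 1) 1).trans (max_le hy.le norm_one.le)

lemma norm_pow_sub_one_le {y : K} (hy : ‖y‖ ≤ 1) (n : ℕ) : ‖y ^ n - 1‖ ≤ ‖y - 1‖ := by
  rw [← geom_sum_mul, norm_mul]
  refine mul_le_of_le_one_left (norm_nonneg _) (norm_sum_le_of_forall_le_of_nonneg zero_le_one ?_)
  exact fun i _ => by rw [norm_pow]; exact pow_le_one₀ (norm_nonneg _) hy

/-- `(y ^ n - 1) / (y - 1)` is `n` plus terms of norm `< 1`. -/
lemma norm_pow_sub_one_of_norm_natCast_eq_one {n : ℕ} (hn : ‖(n : K)‖ = 1) {y : K}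
    (hy : ‖y - 1‖ < 1) : ‖y ^ n - 1‖ = ‖y - 1‖ := by
  have hgeom : ∑ i ∈ range n, y ^ i = n + ∑ i ∈ range n, (y ^ i - 1) := by
    simp [sum_sub_distrib]
  have hrest : ‖∑ i ∈ range n, (y ^ i - 1)‖ < ‖(n : K)‖ := by
    rw [hn]
    exact (norm_sum_le_of_forall_le_of_nonneg (norm_nonneg _) fun i _ =>
      norm_pow_sub_one_le (norm_le_one_of_norm_sub_one_lt_one hy) i).trans_lt hy
  rw [← geom_sum_mul, norm_mul, hgeom, norm_add_eq_left_of_norm_lt hrest, hn, one_mul]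

/-- In `(1 + x) ^ p - 1 = p x + ∑_{i ≥ 2} C(p, i) x ^ i`, the middle binomial coefficients are
divisible by `p` and `‖x ^ p‖ < ‖p x‖` by hypothesis, so `p x` dominates. -/
lemma norm_pow_prime_sub_one {p : ℕ} (hp : p.Prime) {y : K}
    (hy : ‖y - 1‖ ^ (p - 1) < ‖(p : K)‖) : ‖y ^ p - 1‖ = ‖(p : K)‖ * ‖y - 1‖ := by
  set x := y - 1
  rcases eq_or_ne x 0 with hx0 | hx0
  · simp [sub_eq_zero.mp hx0, hx0]
  have hx0' : 0 < ‖x‖ := norm_pos_iff.mpr hx0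
  have hp0 : 0 < ‖(p : K)‖ := (pow_nonneg (norm_nonneg _) _).trans_lt hy
  have hx1 : ‖x‖ < 1 := norm_sub_one_lt_one_of_pow_lt_norm_prime hp hy
  have hexpand : y ^ p - 1 = p * x + ∑ i ∈ Ico 2 (p + 1), x ^ i * (p.choose i : K) := by
    have h2p : 2 ≤ p + 1 := by have := hp.two_le; omega
    rw [show y = x + 1 by ring, add_pow, ← sum_range_add_sum_Ico _ h2p]
    simp [sum_range_succ]
    ring
  have hterm : ∀ i ∈ Ico 2 (p + 1), ‖x ^ i * (p.choose i : K)‖ < ‖(p : K) * x‖ := by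
    intro i hi
    obtain ⟨hi2, hip⟩ := mem_Ico.mp hi
    rw [norm_mul, norm_mul, norm_pow]
    rcases (Nat.lt_succ_iff.mp hip).eq_or_lt with hip | hlt
    · rw [hip, Nat.choose_self, Nat.cast_one, norm_one, mul_one, ← pow_sub_one_mul hp.ne_zero]
      exact mul_lt_mul_of_pos_right hy hx0'
    · obtain ⟨m, hm⟩ := hp.dvd_choose_self (by omega) hlt
      have hchoose : ‖(p.choose i : K)‖ ≤ ‖(p : K)‖ := by
        rw [hm, Nat.cast_mul, norm_mul]
        exact mul_le_of_le_one_right (norm_nonneg _) (norm_natCast_le_one K m)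
      calc ‖x‖ ^ i * ‖(p.choose i : K)‖ ≤ ‖x‖ ^ 2 * ‖(p : K)‖ :=
            mul_le_mul (pow_le_pow_of_le_one (norm_nonneg _) hx1.le hi2) hchoose
              (norm_nonneg _) (by positivity)
        _ < ‖(p : K)‖ * ‖x‖ := by
          rw [mul_comm]
          exact mul_lt_mul_of_pos_left (by nlinarith) hp0
  obtain ⟨j, hj, hle⟩ := exists_norm_finsetSum_le_of_nonempty (t := Ico 2 (p + 1))
    (nonempty_Ico.mpr (by have := hp.two_le; omega)) fun i => x ^ i * (p.choose i : K)
  rw [hexpand, norm_add_eq_left_of_norm_lt (hle.trans_lt (hterm j hj)), norm_mul]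

lemma norm_pow_prime_pow_sub_one {p : ℕ} (hp : p.Prime) {y : K}
    (hy : ‖y - 1‖ ^ (p - 1) < ‖(p : K)‖) (N : ℕ) :
    ‖y ^ p ^ N - 1‖ = ‖(p : K)‖ ^ N * ‖y - 1‖ := by
  induction N with
  | zero => simp
  | succ N ih =>
    have hsmall : ‖y ^ p ^ N - 1‖ ^ (p - 1) < ‖(p : K)‖ := by
      refine (pow_le_pow_left₀ (norm_nonneg _) ?_ _).trans_lt hy
      rw [ih]
      exact mul_le_of_le_one_left (norm_nonneg _)
        (pow_le_one₀ (norm_nonneg _) (norm_natCast_le_one K p))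
    rw [pow_succ, pow_mul, norm_pow_prime_sub_one hp hsmall, ih, pow_succ]
    ring

lemma norm_pow_mul_prime_pow_sub_one {p d : ℕ} (hp : p.Prime) (hd : ‖(d : K)‖ = 1) {y : K}
    (hy : ‖y - 1‖ ^ (p - 1) < ‖(p : K)‖) (N : ℕ) :
    ‖y ^ (d * p ^ N) - 1‖ = ‖(p : K)‖ ^ N * ‖y - 1‖ := by
  have hy1 := norm_sub_one_lt_one_of_pow_lt_norm_prime hp hy
  have hyN : ‖y ^ p ^ N - 1‖ < 1 :=
    (norm_pow_sub_one_le (norm_le_one_of_norm_sub_one_lt_one hy1) _).trans_lt hy1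
  rw [mul_comm, pow_mul, norm_pow_sub_one_of_norm_natCast_eq_one hd hyN,
    norm_pow_prime_pow_sub_one hp hy]

end IsUltrametricDist

lemma rpow_neg_inv_sub_one_pow {p : ℕ} (hp : 1 < p) :
    ((p : ℝ) ^ (-1 / ((p : ℝ) - 1))) ^ (p - 1) = (p : ℝ)⁻¹ := by
  have hp' : (1 : ℝ) < p := by exact_mod_cast hp
  rw [← Real.rpow_natCast, ← Real.rpow_mul (by positivity), Nat.cast_sub hp.le, Nat.cast_one,
    div_mul_cancel₀ _ (by linarith), Real.rpow_neg_one]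

section qEuler

variable {K : Type*} [Field K]

/-- The sum in `E_{k,Q}(t) = (1 + Q) (1 - Q)⁻ᵏ ∑ₗ (-1)ˡ C(k, l) Qᵗˡ / (1 + Qˡ)`, with `t` standing
for `Qᵗ`; unlike `E_{k,Q}` it is continuous at `Q = 1`. -/
def qEulerSum (Q t : K) (k : ℕ) : K :=
  ∑ l ∈ range (k + 1), (-1 : K) ^ l * (k.choose l : K) * t ^ l / (1 + Q ^ l)

lemma qEulerPolyAt_eq_mul_qEulerSum (Q t : K) (k : ℕ) :
    qEulerPolyAt Q t k = (1 + Q) * (1 - Q)⁻¹ ^ k * qEulerSum Q t k := rfl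

lemma qEulerSum_one (t : K) (k : ℕ) : qEulerSum 1 t k = (1 - t) ^ k / 2 := by
  rw [qEulerSum, sub_eq_neg_add, add_pow, sum_div]
  refine sum_congr rfl fun l _ => ?_
  rw [neg_pow, one_pow, one_pow]
  ring

lemma mul_qEulerPolyAt_eq {q Q : K} (hQ1 : Q ≠ 1) (hQ2 : 1 + Q ≠ 0) (t : K) (k : ℕ) :
    ((1 - Q) / (1 - q)) ^ k * ((1 + q) / (1 + Q)) * qEulerPolyAt Q t k =
      (1 + q) * (1 - q)⁻¹ ^ k * qEulerSum Q t k := by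
  have hQ1' : 1 - Q ≠ 0 := sub_ne_zero.mpr hQ1.symm
  rw [qEulerPolyAt_eq_mul_qEulerSum, div_pow, inv_pow, inv_pow]
  field_simp

end qEuler

section Limit

variable {K : Type*} [NormedField K] [CharZero K]

lemma continuousAt_qEulerSum_one (t : K) (k : ℕ) : ContinuousAt (qEulerSum · t k) 1 := by
  refine tendsto_finsetSum _ fun l _ =>
    continuousAt_const.div (continuousAt_const.add (continuousAt_id.pow l)) ?_
  norm_num

theorem tendsto_mul_qEulerPolyAt {ι : Type*} {l : Filter ι} {Q : ι → K}
    (hQ : Tendsto Q l (𝓝 1)) (hQ1 : ∀ᶠ i in l, Q i ≠ 1) (c q t : K) (k : ℕ) :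
    Tendsto (fun i =>
        c * ((1 - Q i) / (1 - q)) ^ k * ((1 + q) / (1 + Q i)) * qEulerPolyAt (Q i) t k)
      l (𝓝 ((1 + q) / 2 * c * ((1 - t) / (1 - q)) ^ k)) := by
  have hsum : Tendsto (fun i => qEulerSum (Q i) t k) l (𝓝 ((1 - t) ^ k / 2)) :=
    qEulerSum_one t k ▸ (continuousAt_qEulerSum_one t k).tendsto.comp hQ
  have hQ2 : ∀ᶠ i in l, 1 + Q i ≠ 0 :=
    (hQ.const_add 1).eventually_ne (by norm_num)
  have hlim : (1 + q) / 2 * c * ((1 - t) / (1 - q)) ^ k =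
      c * ((1 + q) * (1 - q)⁻¹ ^ k * ((1 - t) ^ k / 2)) := by
    rw [div_pow, inv_pow]
    ring
  rw [hlim]
  refine (hsum.const_mul ((1 + q) * (1 - q)⁻¹ ^ k)).const_mul c |>.congr' ?_
  filter_upwards [hQ1, hQ2] with i h1 h2
  rw [mul_assoc c, mul_assoc c, mul_qEulerPolyAt_eq h1 h2]

end Limit

theorem qEuler_measure_limit_general {K : Type*} [NontriviallyNormedField K]
    [CharZero K] [IsUltrametricDist K]
    (p : ℕ) (hp : Nat.Prime p) (hnp : ‖(p : K)‖ = (p : ℝ)⁻¹)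
    (q : K) (hq : ‖q - 1‖ < (p : ℝ) ^ (-1 / ((p : ℝ) - 1)))
    (k : ℕ) (hk : 1 ≤ k) (d : ℕ)
    (hcop : Nat.Coprime d p) (a : ℕ) :
    Filter.Tendsto
      (fun N : ℕ =>
        (-1 : K) ^ a * ((1 - q ^ (d * p ^ N)) / (1 - q)) ^ k *
          ((1 + q) / (1 + q ^ (d * p ^ N))) * qEulerPolyAt (q ^ (d * p ^ N)) (q ^ a) k)
      Filter.atTop
      (nhds (((1 + q) / 2) * (-1 : K) ^ a * ((1 - q ^ a) / (1 - q)) ^ k)) := by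
  rcases eq_or_ne q 1 with rfl | hq1
  · simp [zero_pow (by omega : k ≠ 0)]
  have hp1 : ‖(p : K)‖ < 1 := hnp ▸ inv_lt_one_of_one_lt₀ (by exact_mod_cast hp.one_lt)
  have hsmall : ‖q - 1‖ ^ (p - 1) < ‖(p : K)‖ := by
    rw [hnp, ← rpow_neg_inv_sub_one_pow hp.one_lt]
    exact pow_lt_pow_left₀ hq (norm_nonneg _) (Nat.sub_ne_zero_of_lt hp.one_lt)
  have hnorm := norm_pow_mul_prime_pow_sub_one hp (norm_natCast_eq_one_of_coprime hp1 hcop) hsmall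
  have hQ : Tendsto (fun N => q ^ (d * p ^ N)) atTop (𝓝 1) := by
    rw [tendsto_iff_norm_sub_tendsto_zero]
    simpa [hnorm] using
      (tendsto_pow_atTop_nhds_zero_of_lt_one (norm_nonneg _) hp1).mul_const ‖q - 1‖
  have hQ1 (N : ℕ) : q ^ (d * p ^ N) ≠ 1 := by
    refine sub_ne_zero.mp (norm_ne_zero_iff.mp ?_)
    rw [hnorm]
    exact mul_ne_zero (pow_ne_zero _ (norm_ne_zero_iff.mpr (Nat.cast_ne_zero.mpr hp.ne_zero)))
      (norm_ne_zero_iff.mpr (sub_ne_zero.mpr hq1))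
  exact tendsto_mul_qEulerPolyAt hQ (.of_forall hQ1) _ _ _ _

/-- In a complete ultrametric field modeling `ℂ_p` (odd prime `p`, `‖p‖ = 1/p`),
for `‖q-1‖ < p^{-1/(p-1)}`, `k ≥ 1`, `d` odd coprime to `p`, the q-Euler measure
`μ*_k(a + dp^N ℤ_p) = (-1)^a [dp^N]_q^k ([2]_q/[2]_{q^{dp^N}}) E_{k,q^{dp^N}}(a/(dp^N))`
(with `(q^{dp^N})^{a/(dp^N)} = q^a`) converges, as `N → ∞`, to
`((1+q)/2) (-1)^a [a]_q^k`. -/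
theorem qEuler_measure_limit {K : Type*} [NontriviallyNormedField K]
    [CompleteSpace K] [CharZero K] [IsUltrametricDist K]
    (p : ℕ) (hp : Nat.Prime p) (hpo : Odd p) (hnp : ‖(p : K)‖ = (p : ℝ)⁻¹)
    (q : K) (hq : ‖q - 1‖ < (p : ℝ) ^ (-1 / ((p : ℝ) - 1)))
    (k : ℕ) (hk : 1 ≤ k) (d : ℕ) (hdo : Odd d) (hd0 : 0 < d)
    (hcop : Nat.Coprime d p) (a : ℕ) :
    Filter.Tendsto
      (fun N : ℕ =>
        (-1 : K) ^ a * ((1 - q ^ (d * p ^ N)) / (1 - q)) ^ k *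
          ((1 + q) / (1 + q ^ (d * p ^ N))) * qEulerPolyAt (q ^ (d * p ^ N)) (q ^ a) k)
      Filter.atTop
      (nhds (((1 + q) / 2) * (-1 : K) ^ a * ((1 - q ^ a) / (1 - q)) ^ k)) :=
  qEuler_measure_limit_general p hp hnp q hq k hk d hcop a
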